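/- Let 1 < s ≤ 2 and s* = s/(s−1) ≥ 2, and let F be a random variable with E[F] = 0. Then ‖F‖_s := inf{M > 0 : log E[exp(|F/M|^s)] ≤ 1} is comparable (with constants depending only on s) to inf{M > 0 : for all ν ∈ ℝ, log E[exp(ν F/M)] ≤ max{ν²/2, |ν|^{s*}/s*}}. -/

import Mathlib

/-!
Write `s*` for the conjugate exponent of `s`. If `E exp |G|^s ≤ e`, Young's inequality
`νG ≤ |G|^s + |ν|^{s*}` bounds `E exp(νG)` by `exp(|ν|^{s*} + 1)`, which is good for large `ν`;
for `|ν| ≤ 1` the expansion `exp y ≤ 1 + y + y² exp |y|` together with `E G = 0` gives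
`E exp(νG) ≤ 1 + O(ν²)`. After rescaling `ν` by a constant this is the cumulant bound.

Conversely, Chernoff's bound at `ν = t^{s-1}` turns the cumulant bound into
`P(|G| ≥ t) ≤ 2 exp(-t^s/2)` for `t ≥ 1` (since `s ≤ 2 ≤ s*`, both `ν²/2` and `ν^{s*}/s*` are
at most `t^s/2`), and the layer-cake formula integrates this tail to `E exp(|G|^s/8) ≤ e`.

Each direction maps one set of admissible scales `M` into the other by a dilation, which
compares the two infima; if one set is empty, so is the other, and both infima are `0`.
-/

open MeasureTheory ProbabilityTheory Real Set
open scoped Pointwise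

namespace Real

lemma exp_sub_one_le_mul_exp (x : ℝ) : exp x - 1 ≤ x * exp x := by
  have h := add_one_le_exp (-x)
  have : exp (-x) * exp x = 1 := by rw [← exp_add]; simp
  nlinarith [exp_pos x]

lemma exp_le_one_add_add_sq_mul_exp_abs (y : ℝ) : exp y ≤ 1 + y + y ^ 2 * exp |y| := by
  -- `exp y - 1 - y ≤ y (exp y - 1)`, and the right side is at most `y² exp y` for `y ≥ 0`
  -- and at most `y²` for `y ≤ 0`
  have h₁ := exp_sub_one_le_mul_exp y
  have h₂ := add_one_le_exp y
  rcases le_total 0 y with hy | hy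
  · rw [abs_of_nonneg hy]
    nlinarith [mul_le_mul_of_nonneg_left h₁ hy]
  · nlinarith [mul_le_mul_of_nonpos_left h₂ hy, one_le_exp (abs_nonneg y), sq_nonneg y]

lemma HolderConjugate.mul_le_rpow_add_rpow {s q : ℝ} (hsq : s.HolderConjugate q) {x b : ℝ}
    (hx : 0 ≤ x) (hb : 0 ≤ b) : x * b ≤ x ^ s + b ^ q := by
  have hs : 1 ≤ s := hsq.lt.le
  have hq : 1 ≤ q := hsq.symm.lt.le
  calc x * b ≤ x ^ s / s + b ^ q / q := young_inequality_of_nonneg hx hb hsq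
    _ ≤ x ^ s + b ^ q := by
      gcongr
      · exact div_le_self (by positivity) hs
      · exact div_le_self (by positivity) hq

lemma HolderConjugate.sq_mul_exp_abs_le {s q : ℝ} (hsq : s.HolderConjugate q) (x : ℝ) :
    x ^ 2 * exp |x| ≤ exp (3 ^ q) * exp (|x| ^ s) := by
  have hsq_le : x ^ 2 ≤ exp |x| ^ 2 := by
    rw [← sq_abs]
    gcongr
    linarith [add_one_le_exp |x|]
  calc x ^ 2 * exp |x| ≤ exp |x| ^ 2 * exp |x| := by gcongr
    _ = exp (|x| * 3) := by rw [sq, ← exp_add, ← exp_add]; ring_nf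
    _ ≤ exp (|x| ^ s + 3 ^ q) := by
      gcongr
      exact hsq.mul_le_rpow_add_rpow (abs_nonneg x) (by norm_num)
    _ = exp (3 ^ q) * exp (|x| ^ s) := by rw [← exp_add, add_comm]

end Real

lemma csInf_le_mul_csInf_of_forall_mul_mem {A B : Set ℝ} {c C : ℝ} (hA : ∀ M ∈ A, 0 ≤ M)
    (hB : ∀ M ∈ B, 0 ≤ M) (hc : 0 ≤ c) (hcC : c ≤ C) (hAB : A.Nonempty → B.Nonempty)
    (hBA : ∀ M ∈ B, c * M ∈ A) : sInf A ≤ C * sInf B := by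
  rcases B.eq_empty_or_nonempty with rfl | hB'
  · have : A = ∅ := not_nonempty_iff_eq_empty.1 fun hA' => (hAB hA').ne_empty rfl
    simp [this]
  · calc sInf A ≤ sInf (c • B) :=
        csInf_le_csInf ⟨0, hA⟩ hB'.smul_set (by rintro _ ⟨M, hM, rfl⟩; exact hBA M hM)
      _ = c * sInf B := Real.sInf_smul_of_nonneg hc B
      _ ≤ C * sInf B := by gcongr; exact sInf_nonneg hB

section MomentBounds

variable {Ω : Type*} [MeasurableSpace Ω] {μ : Measure Ω} {G : Ω → ℝ} {s q : ℝ}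

lemma mgf_le_exp_abs_rpow_add_one (hsq : s.HolderConjugate q)
    (hGs : Integrable (fun ω => exp (|G ω| ^ s)) μ) (hGs_le : ∫ ω, exp (|G ω| ^ s) ∂μ ≤ exp 1)
    (t : ℝ) : mgf G μ t ≤ exp (|t| ^ q + 1) :=
  calc mgf G μ t ≤ ∫ ω, exp (|t| ^ q) * exp (|G ω| ^ s) ∂μ := by
        refine integral_mono_of_nonneg (.of_forall fun ω => (exp_pos _).le)
          (hGs.const_mul _) (.of_forall fun ω => ?_)
        dsimp only
        rw [← exp_add, add_comm]
        gcongr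
        calc t * G ω ≤ |G ω| * |t| := by rw [mul_comm, ← abs_mul]; exact le_abs_self _
          _ ≤ |G ω| ^ s + |t| ^ q := hsq.mul_le_rpow_add_rpow (abs_nonneg _) (abs_nonneg _)
    _ = exp (|t| ^ q) * ∫ ω, exp (|G ω| ^ s) ∂μ := integral_const_mul _ _
    _ ≤ exp (|t| ^ q) * exp 1 := by gcongr
    _ = exp (|t| ^ q + 1) := (exp_add _ _).symm

lemma mgf_le_one_add_sq_mul [IsProbabilityMeasure μ] (hsq : s.HolderConjugate q)
    (hG : Integrable G μ) (hG0 : ∫ ω, G ω ∂μ = 0) (hGs : Integrable (fun ω => exp (|G ω| ^ s)) μ)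
    (hGs_le : ∫ ω, exp (|G ω| ^ s) ∂μ ≤ exp 1) {t : ℝ} (ht : |t| ≤ 1) :
    mgf G μ t ≤ 1 + t ^ 2 * exp (3 ^ q + 1) := by
  have hpt (ω : Ω) : exp (t * G ω) ≤ 1 + t * G ω + t ^ 2 * exp (3 ^ q) * exp (|G ω| ^ s) :=
    calc exp (t * G ω) ≤ 1 + t * G ω + (t * G ω) ^ 2 * exp |t * G ω| :=
          exp_le_one_add_add_sq_mul_exp_abs _
      _ ≤ 1 + t * G ω + t ^ 2 * (G ω ^ 2 * exp |G ω|) := by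
          rw [mul_pow, mul_assoc]
          gcongr 1 + t * G ω + t ^ 2 * (G ω ^ 2 * exp ?_)
          rw [abs_mul]
          exact mul_le_of_le_one_left (abs_nonneg _) ht
      _ ≤ 1 + t * G ω + t ^ 2 * (exp (3 ^ q) * exp (|G ω| ^ s)) := by
          gcongr 1 + t * G ω + t ^ 2 * ?_
          exact hsq.sq_mul_exp_abs_le _
      _ = _ := by ring
  have hlin : Integrable (fun ω => 1 + t * G ω) μ := (integrable_const 1).add (hG.const_mul t)
  calc mgf G μ t ≤ ∫ ω, (1 + t * G ω + t ^ 2 * exp (3 ^ q) * exp (|G ω| ^ s)) ∂μ :=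
        integral_mono_of_nonneg (.of_forall fun ω => (exp_pos _).le)
          (hlin.add (hGs.const_mul _)) (.of_forall hpt)
    _ = 1 + t ^ 2 * exp (3 ^ q) * ∫ ω, exp (|G ω| ^ s) ∂μ := by
        rw [integral_add hlin (hGs.const_mul _), integral_add (integrable_const 1)
          (hG.const_mul t), integral_const_mul, integral_const_mul, hG0]
        simp
    _ ≤ 1 + t ^ 2 * exp (3 ^ q) * exp 1 := by gcongr
    _ = 1 + t ^ 2 * exp (3 ^ q + 1) := by rw [exp_add, mul_assoc]

lemma cgf_div_le_of_integral_exp_abs_rpow_le [IsProbabilityMeasure μ]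
    (hsq : s.HolderConjugate q) (hG : Integrable G μ)
    (hG0 : ∫ ω, G ω ∂μ = 0) (hexp : ∀ t, Integrable (fun ω => exp (t * G ω)) μ)
    (hGs : Integrable (fun ω => exp (|G ω| ^ s)) μ) (hGs_le : ∫ ω, exp (|G ω| ^ s) ∂μ ≤ exp 1)
    (ν : ℝ) :
    cgf G μ (ν / (2 * (q + exp (3 ^ q + 1)))) ≤ max (ν ^ 2 / 2) (|ν| ^ q / q) := by
  set K := exp (3 ^ q + 1)
  set C := 2 * (q + K)
  set t := ν / C
  have hq : 1 ≤ q := hsq.symm.lt.le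
  have hK : 1 ≤ K := one_le_exp (by positivity)
  have hC : 1 ≤ C := by linarith
  have hν : ν = C * t := (mul_div_cancel₀ ν (by linarith : (0:ℝ) < C).ne').symm
  suffices mgf G μ t ≤ exp (max (ν ^ 2 / 2) (|ν| ^ q / q)) from
    (log_le_iff_le_exp (mgf_pos (hexp t))).2 this
  rcases le_or_gt |t| 1 with ht | ht
  · have hCK : 2 * K ≤ C ^ 2 := by nlinarith
    calc mgf G μ t ≤ 1 + t ^ 2 * K := mgf_le_one_add_sq_mul hsq hG hG0 hGs hGs_le ht
      _ ≤ 1 + ν ^ 2 / 2 := by rw [hν]; nlinarith [sq_nonneg t]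
      _ ≤ exp (ν ^ 2 / 2) := by linarith [add_one_le_exp (ν ^ 2 / 2)]
      _ ≤ _ := by gcongr; exact le_max_left _ _
  · have htq : 1 ≤ |t| ^ q := one_le_rpow ht.le (by linarith)
    have hCq : 2 * q ≤ C ^ q := by
      linarith [self_le_rpow_of_one_le hC hq]
    calc mgf G μ t ≤ exp (|t| ^ q + 1) := mgf_le_exp_abs_rpow_add_one hsq hGs hGs_le t
      _ ≤ exp (C ^ q * |t| ^ q / q) := by
        gcongr
        rw [le_div_iff₀ (by linarith)]
        nlinarith
      _ = exp (|ν| ^ q / q) := by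
        rw [hν, abs_mul, abs_of_pos (by linarith : 0 < C), mul_rpow (by linarith) (abs_nonneg _)]
      _ ≤ _ := by gcongr; exact le_max_right _ _

lemma measureReal_ge_le_exp_neg_rpow [IsFiniteMeasure μ] (hsq : s.HolderConjugate q)
    (hs2 : s ≤ 2) (hexp : ∀ t, Integrable (fun ω => exp (t * G ω)) μ)
    (hcgf : ∀ ν, 0 ≤ ν → cgf G μ ν ≤ max (ν ^ 2 / 2) (ν ^ q / q)) {t : ℝ} (ht : 1 ≤ t) :
    μ.real {ω | t ≤ G ω} ≤ exp (-(t ^ s / 2)) := by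
  set ν := t ^ (s - 1)
  have ht0 : 0 < t := by linarith
  have hν0 : 0 ≤ ν := by positivity
  have hνt : ν * t = t ^ s := by rw [← rpow_add_one ht0.ne']; ring_nf
  have hν2 : ν ^ 2 ≤ t ^ s := by
    rw [← rpow_natCast, ← rpow_mul ht0.le]
    exact rpow_le_rpow_of_exponent_le ht (by push_cast; linarith)
  have hνq : ν ^ q = t ^ s := by rw [← rpow_mul ht0.le, hsq.sub_one_mul_conj]
  have hq2 : 2 ≤ q := by
    rw [hsq.conjugate_eq, le_div_iff₀ hsq.sub_one_pos]
    linarith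
  have hmax : max (ν ^ 2 / 2) (ν ^ q / q) ≤ t ^ s / 2 := by
    rw [hνq]
    exact max_le (by linarith) (div_le_div_of_nonneg_left (by positivity) two_pos hq2)
  calc μ.real {ω | t ≤ G ω} ≤ exp (-ν * t + cgf G μ ν) :=
        measure_ge_le_exp_cgf t hν0 (hexp ν)
    _ ≤ exp (-(t ^ s / 2)) := by
        gcongr
        linarith [hcgf ν hν0]

lemma measureReal_le_abs_rpow_le [IsFiniteMeasure μ] (hsq : s.HolderConjugate q)
    (hs2 : s ≤ 2) (hexp : ∀ t, Integrable (fun ω => exp (t * G ω)) μ)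
    (hcgf : ∀ ν, cgf G μ ν ≤ max (ν ^ 2 / 2) (|ν| ^ q / q)) {T : ℝ} (hT : 1 ≤ T) :
    μ.real {ω | T ≤ |G ω| ^ s} ≤ 2 * exp (-(T / 2)) := by
  have hs0 : 0 < s := hsq.pos
  set t := T ^ s⁻¹
  have ht : 1 ≤ t := one_le_rpow hT (by positivity)
  have hts : t ^ s = T := rpow_inv_rpow (by linarith) hs0.ne'
  have hsub : {ω | T ≤ |G ω| ^ s} ⊆ {ω | t ≤ G ω} ∪ {ω | t ≤ (-G) ω} := by
    intro ω hω
    have htG : t ≤ |G ω| := by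
      rwa [← rpow_le_rpow_iff (by positivity) (abs_nonneg _) hs0, hts]
    rcases le_abs'.1 htG with h | h
    · exact Or.inr (by simp only [mem_ofPred_eq, Pi.neg_apply]; linarith)
    · exact Or.inl h
  have hupper := measureReal_ge_le_exp_neg_rpow hsq hs2 hexp
    (fun ν hν => by simpa [abs_of_nonneg hν] using hcgf ν) ht
  have hlower := measureReal_ge_le_exp_neg_rpow (G := -G) hsq hs2
    (fun t => by simpa using hexp (-t))
    (fun ν hν => by simpa [cgf_neg, abs_of_nonneg hν] using hcgf (-ν)) ht
  calc μ.real {ω | T ≤ |G ω| ^ s} ≤ μ.real ({ω | t ≤ G ω} ∪ {ω | t ≤ (-G) ω}) :=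
        measureReal_mono hsub
    _ ≤ μ.real {ω | t ≤ G ω} + μ.real {ω | t ≤ (-G) ω} := measureReal_union_le _ _
    _ ≤ 2 * exp (-(T / 2)) := by rw [hts] at hupper hlower; linarith

lemma integral_le_of_measureReal_lt_le_rpow [IsProbabilityMeasure μ] {f : Ω → ℝ} (hf0 : 0 ≤ f)
    (hf : Integrable f μ) {a c r : ℝ} (ha : 0 < a) (hr : r < -1)
    (htail : ∀ u, a < u → μ.real {ω | u < f ω} ≤ c * u ^ r) :
    ∫ ω, f ω ∂μ ≤ a - c * a ^ (r + 1) / (r + 1) := by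
  set g : ℝ → ℝ := fun u => if u ≤ a then 1 else c * u ^ r
  have hg₁ : EqOn g 1 (Ioc 0 a) := fun u hu => if_pos hu.2
  have hg₂ : EqOn g (fun u => c * u ^ r) (Ioi a) := fun u hu => if_neg (not_le.2 hu)
  have hint₁ : IntegrableOn g (Ioc 0 a) :=
    (integrableOn_const measure_Ioc_lt_top.ne).congr_fun hg₁.symm measurableSet_Ioc
  have hint₂ : IntegrableOn g (Ioi a) :=
    IntegrableOn.congr_fun ((integrableOn_Ioi_rpow_of_lt hr ha).const_mul c) hg₂.symm
      measurableSet_Ioi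
  have hsplit : Ioi (0 : ℝ) = Ioc 0 a ∪ Ioi a := (Ioc_union_Ioi_eq_Ioi ha.le).symm
  have htail_le (u : ℝ) : μ.real {ω | u < f ω} ≤ g u := by
    by_cases hu : u ≤ a
    · simp [g, hu]
    · simpa [g, hu] using htail u (not_le.1 hu)
  calc ∫ ω, f ω ∂μ = ∫ u in Ioi 0, μ.real {ω | u < f ω} :=
        hf.integral_eq_integral_meas_lt (.of_forall hf0)
    _ ≤ ∫ u in Ioi 0, g u :=
        integral_mono_of_nonneg (.of_forall fun _ => measureReal_nonneg)
          (hsplit ▸ hint₁.union hint₂) (.of_forall htail_le)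
    _ = (∫ u in Ioc 0 a, g u) + ∫ u in Ioi a, g u := by
        rw [hsplit]
        exact setIntegral_union (Ioc_disjoint_Ioi le_rfl) measurableSet_Ioi hint₁ hint₂
    _ = a - c * a ^ (r + 1) / (r + 1) := by
        rw [setIntegral_congr_fun measurableSet_Ioc hg₁,
          setIntegral_congr_fun measurableSet_Ioi hg₂, integral_const_mul, integral_Ioi_rpow_of_lt hr ha]
        simp only [Pi.one_apply, integral_const, MeasurableSet.univ, measureReal_restrict_apply,
          univ_inter, volume_real_Ioc, sub_zero, ha.le, sup_of_le_left, smul_eq_mul, mul_one]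
        ring

lemma integral_exp_abs_rpow_div_le_of_cgf_le [IsProbabilityMeasure μ] (hsq : s.HolderConjugate q)
    (hs2 : s ≤ 2) (hexp : ∀ t, Integrable (fun ω => exp (t * G ω)) μ)
    (hcgf : ∀ ν, cgf G μ ν ≤ max (ν ^ 2 / 2) (|ν| ^ q / q))
    (hGs : Integrable (fun ω => exp (|G ω| ^ s / 8)) μ) :
    ∫ ω, exp (|G ω| ^ s / 8) ∂μ ≤ exp 1 := by
  have htail (u : ℝ) (hu : 2 < u) :
      μ.real {ω | u < exp (|G ω| ^ s / 8)} ≤ 2 * u ^ (-4 : ℝ) := by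
    have hu0 : 0 < u := by linarith
    have hlogu : 1 ≤ 8 * log u := by
      linarith [log_two_gt_d9, log_le_log two_pos hu.le]
    calc μ.real {ω | u < exp (|G ω| ^ s / 8)} ≤ μ.real {ω | 8 * log u ≤ |G ω| ^ s} :=
          measureReal_mono fun ω hω => by
            have := (log_lt_iff_lt_exp hu0).2 hω
            simp only [mem_ofPred_eq]
            linarith
      _ ≤ 2 * exp (-(8 * log u / 2)) := measureReal_le_abs_rpow_le hsq hs2 hexp hcgf hlogu
      _ = 2 * u ^ (-4 : ℝ) := by rw [rpow_def_of_pos hu0]; ring_nf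
  calc ∫ ω, exp (|G ω| ^ s / 8) ∂μ ≤ 2 - 2 * 2 ^ ((-4 : ℝ) + 1) / ((-4 : ℝ) + 1) :=
        integral_le_of_measureReal_lt_le_rpow (fun ω => (exp_pos _).le) hGs two_pos
          (by norm_num) htail
    _ = 2 + 1 / 12 := by norm_num
    _ ≤ exp 1 := by linarith [exp_one_gt_d9]

def orliczScales (μ : Measure Ω) (F : Ω → ℝ) (s : ℝ) : Set ℝ :=
  {M | 0 < M ∧ log (∫ ω, exp (|F ω / M| ^ s) ∂μ) ≤ 1}

def cumulantScales (μ : Measure Ω) (F : Ω → ℝ) (q : ℝ) : Set ℝ :=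
  {M | 0 < M ∧ ∀ ν : ℝ, log (∫ ω, exp (ν * F ω / M) ∂μ) ≤ max (ν ^ 2 / 2) (|ν| ^ q / q)}

variable {F : Ω → ℝ} {M : ℝ}

lemma mul_mem_cumulantScales [IsProbabilityMeasure μ] (hsq : s.HolderConjugate q)
    (hF : Integrable F μ) (hF0 : ∫ ω, F ω ∂μ = 0)
    (hexp : ∀ ν, Integrable (fun ω => exp (ν * F ω)) μ)
    (hFs : Integrable (fun ω => exp (|F ω / M| ^ s)) μ) (hM : M ∈ orliczScales μ F s) :
    2 * (q + exp (3 ^ q + 1)) * M ∈ cumulantScales μ F q := by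
  obtain ⟨hM0, hMs⟩ := hM
  refine ⟨by have := hsq.symm.pos; positivity, fun ν => ?_⟩
  have key := cgf_div_le_of_integral_exp_abs_rpow_le (G := fun ω => F ω / M) hsq
    (hF.div_const M) (by rw [integral_div, hF0, zero_div])
    (fun t => by convert hexp (t / M) using 3; ring) hFs
    ((log_le_iff_le_exp (integral_exp_pos hFs)).1 hMs) ν
  refine le_of_eq_of_le ?_ key
  simp only [cgf, mgf]
  congr 2 with ω
  rw [div_mul_div_comm]

lemma mul_mem_orliczScales [IsProbabilityMeasure μ] (hsq : s.HolderConjugate q) (hs2 : s ≤ 2)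
    (hexp : ∀ ν, Integrable (fun ω => exp (ν * F ω)) μ)
    (hFs : Integrable (fun ω => exp (|F ω / ((8 : ℝ) ^ s⁻¹ * M)| ^ s)) μ)
    (hM : M ∈ cumulantScales μ F q) : (8 : ℝ) ^ s⁻¹ * M ∈ orliczScales μ F s := by
  obtain ⟨hM0, hMq⟩ := hM
  have h8 : (0 : ℝ) < 8 ^ s⁻¹ := by positivity
  have hscale (ω : Ω) : |F ω / (8 ^ s⁻¹ * M)| ^ s = |F ω / M| ^ s / 8 := by
    rw [mul_comm, ← div_div, abs_div, abs_of_pos h8, div_rpow (abs_nonneg _) h8.le,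
      rpow_inv_rpow (by norm_num) hsq.pos.ne']
  refine ⟨by positivity, (log_le_iff_le_exp (integral_exp_pos hFs)).2 ?_⟩
  simp only [hscale] at hFs ⊢
  refine integral_exp_abs_rpow_div_le_of_cgf_le hsq hs2
    (fun t => by convert hexp (t / M) using 3; ring) (fun ν => ?_) hFs
  simpa only [cgf, mgf, mul_div_assoc] using hMq ν

end MomentBounds

/-- For `1 < s ≤ 2`, `s* = s/(s−1)`, and centered `F`, the Orlicz norm
`inf{M > 0 : log E[exp(|F/M|^s)] ≤ 1}` is comparable (with constants depending only on `s`)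
to `inf{M > 0 : ∀ν, log E[exp(νF/M)] ≤ max{ν²/2, |ν|^{s*}/s*}}`. -/
theorem stmt_19 (s : ℝ) (hs1 : 1 < s) (hs2 : s ≤ 2) :
    ∃ C : ℝ, 0 < C ∧
      ∀ {Ω : Type} [MeasurableSpace Ω] (μ : Measure Ω) [IsProbabilityMeasure μ]
        (F : Ω → ℝ),
        Integrable F μ → (∫ ω, F ω ∂μ) = 0 →
        (∀ ν : ℝ, Integrable (fun ω => Real.exp (ν * F ω)) μ) →
        (∀ M : ℝ, 0 < M → Integrable (fun ω => Real.exp (|F ω / M| ^ s)) μ) →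
        (sInf {M : ℝ | 0 < M ∧
            Real.log (∫ ω, Real.exp (|F ω / M| ^ s) ∂μ) ≤ 1} ≤
          C * sInf {M : ℝ | 0 < M ∧ ∀ ν : ℝ,
            Real.log (∫ ω, Real.exp (ν * F ω / M) ∂μ) ≤
              max (ν ^ 2 / 2) (|ν| ^ (s / (s - 1)) / (s / (s - 1)))}) ∧
        (sInf {M : ℝ | 0 < M ∧ ∀ ν : ℝ,
            Real.log (∫ ω, Real.exp (ν * F ω / M) ∂μ) ≤
              max (ν ^ 2 / 2) (|ν| ^ (s / (s - 1)) / (s / (s - 1)))} ≤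
          C * sInf {M : ℝ | 0 < M ∧
            Real.log (∫ ω, Real.exp (|F ω / M| ^ s) ∂μ) ≤ 1}) := by
  set q := s / (s - 1)
  have hsq : s.HolderConjugate q := (holderConjugate_iff_eq_conjExponent hs1).2 rfl
  set C₁ := 2 * (q + exp (3 ^ q + 1))
  set C₂ := (8 : ℝ) ^ s⁻¹
  have hC₁ : 0 < C₁ := by have := hsq.symm.pos; positivity
  have hC₂ : 0 < C₂ := by positivity
  refine ⟨max C₁ C₂, lt_max_of_lt_left hC₁, fun μ _ F hF hF0 hexp hOrl => ?_⟩
  have hAB (M : ℝ) (hM : M ∈ orliczScales μ F s) : C₁ * M ∈ cumulantScales μ F q :=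
    mul_mem_cumulantScales hsq hF hF0 hexp (hOrl M hM.1) hM
  have hBA (M : ℝ) (hM : M ∈ cumulantScales μ F q) : C₂ * M ∈ orliczScales μ F s :=
    mul_mem_orliczScales hsq hs2 hexp (hOrl _ (mul_pos hC₂ hM.1)) hM
  exact ⟨csInf_le_mul_csInf_of_forall_mul_mem (fun M hM => hM.1.le) (fun M hM => hM.1.le)
      hC₂.le (le_max_right _ _) (fun ⟨M, hM⟩ => ⟨_, hAB M hM⟩) hBA,
    csInf_le_mul_csInf_of_forall_mul_mem (fun M hM => hM.1.le) (fun M hM => hM.1.le)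
      hC₁.le (le_max_left _ _) (fun ⟨M, hM⟩ => ⟨_, hBA M hM⟩) hAB⟩
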